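/- arXiv:1609.02457 — 4 statements merged into one kernel-verified Lean document; each statement's English description precedes it below -/
import Mathlib

section
/- Let n be a positive integer and m ∈ ℤ. The stationary Gaussian quasi-interpolant of the exponential e_m(x) = exp(2πi m x) at spacing h = 1/n satisfies Q_{1/n}(e_m)(x) = Σ_{k∈ℤ} ψ̂(k + m/n) · e_{m+nk}(x), where Q_h(f)(x) = Σ_{ℓ∈ℤ} f(hℓ)·ψ(x/h − ℓ) and ψ̂(t) = exp(−2π²t²). -/
open Real Complex

/-- The stationary Gaussian quasi-interpolant at spacing `h = 1/n` of the exponential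
`e_m(x) = exp(2πimx)` satisfies `Q_{1/n}(e_m)(x) = Σ_{k∈ℤ} ψ̂(k + m/n) e_{m+nk}(x)`,
where `ψ(x) = (1/√(2π))exp(−x²/2)` and `ψ̂(t) = exp(−2π²t²)`. -/
theorem quasi_interpolant_exponential (n : ℕ) (hn : 0 < n) (m : ℤ) (x : ℝ) :
    ∑' ℓ : ℤ, Complex.exp (2 * Real.pi * Complex.I * m * ((ℓ : ℂ) / n)) *
        ((1 / Real.sqrt (2 * Real.pi) * Real.exp (-((n : ℝ) * x - ℓ) ^ 2 / 2) : ℝ) : ℂ)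
      = ∑' k : ℤ, (Real.exp (-2 * Real.pi ^ 2 * ((k : ℝ) + (m : ℝ) / n) ^ 2) : ℂ) *
          Complex.exp (2 * Real.pi * Complex.I * ((m : ℂ) + n * k) * x) := by
  have hn' : (n : ℂ) ≠ 0 := Nat.cast_ne_zero.mpr hn.ne'
  have hπ : (0:ℝ) < Real.pi := Real.pi_pos
  have hπC : (Real.pi : ℂ) ≠ 0 := Complex.ofReal_ne_zero.mpr hπ.ne'
  have hs : (0:ℝ) < Real.sqrt (2 * Real.pi) := Real.sqrt_pos.mpr (by positivity)
  set a : ℂ := ((1 / (2 * Real.pi) : ℝ) : ℂ) with ha_def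
  have ha : 0 < a.re := by simp [ha_def]; positivity
  set b : ℂ := (n : ℂ) * x / (2 * Real.pi) + Complex.I * m / n with hb_def
  set c : ℂ := ((1 / Real.sqrt (2 * Real.pi) * Real.exp (-((n:ℝ) * x)^2 / 2) : ℝ) : ℂ)
    with hc_def
  have key := Complex.tsum_exp_neg_quadratic ha b
  -- Step 1: rewrite the LHS as c * (theta sum)
  have hL : (∑' ℓ : ℤ, Complex.exp (2 * Real.pi * Complex.I * m * ((ℓ : ℂ) / n)) *
        ((1 / Real.sqrt (2 * Real.pi) * Real.exp (-((n : ℝ) * x - ℓ) ^ 2 / 2) : ℝ) : ℂ))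
      = c * ∑' ℓ : ℤ, Complex.exp (-Real.pi * a * (ℓ:ℂ) ^ 2 + 2 * Real.pi * b * ℓ) := by
    rw [← tsum_mul_left]
    refine tsum_congr fun ℓ => ?_
    rw [hc_def, hb_def, ha_def]
    push_cast
    have e1 : -(Real.pi:ℂ) * (1 / (2 * Real.pi)) = -1/2 := by
      field_simp
    have e2 : 2*(Real.pi:ℂ)*((n:ℂ)*x/(2*Real.pi) + Complex.I*m/n)
        = (n:ℂ)*x + 2*Real.pi*Complex.I*m/n := by
      field_simp
    rw [mul_left_comm, ← Complex.exp_add]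
    conv_rhs => rw [mul_assoc, ← Complex.exp_add]
    rw [e1, e2]
    congr 2
    field_simp
    ring
  -- Step 2: compute 1 / a^(1/2)
  have hsq : (1:ℂ) / a ^ ((1:ℂ)/2) = (Real.sqrt (2 * Real.pi) : ℂ) := by
    have h0 : (0:ℝ) ≤ 1 / (2 * Real.pi) := by positivity
    have h1 : a ^ ((1:ℂ)/2) = (((1 / (2 * Real.pi) : ℝ) ^ ((1:ℝ)/2) : ℝ) : ℂ) := by
      rw [Complex.ofReal_cpow h0, ha_def]
      congr 1
      norm_num
    have hr : (1 / (2 * Real.pi)) ^ ((1:ℝ)/2) = (Real.sqrt (2 * Real.pi))⁻¹ := by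
      rw [one_div, Real.inv_rpow (by positivity), ← Real.sqrt_eq_rpow]
    rw [h1, hr]
    push_cast
    rw [one_div, inv_inv]
  -- Step 3: rewrite the RHS side of the theta identity
  rw [hL, key, hsq]
  rw [← mul_assoc]
  have hcs : c * (Real.sqrt (2 * Real.pi) : ℂ) = ((Real.exp (-((n:ℝ) * x)^2 / 2) : ℝ) : ℂ) := by
    rw [hc_def, ← Complex.ofReal_mul]
    congr 1
    field_simp
  rw [hcs]
  rw [← (Equiv.neg ℤ).tsum_eq fun k : ℤ =>
    Complex.exp (-(Real.pi:ℂ) / a * ((k:ℂ) + Complex.I * b) ^ 2)]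
  rw [← tsum_mul_left]
  refine tsum_congr fun k => ?_
  simp only [Equiv.neg_apply]
  rw [ha_def, hb_def]
  have e3 : -(Real.pi:ℂ) / ((1 / (2 * Real.pi) : ℝ) : ℂ) = -2 * Real.pi^2 := by
    push_cast; field_simp
  rw [e3]
  push_cast
  rw [← Complex.exp_add, ← Complex.exp_add]
  congr 1
  have h4 : Complex.I^4 = 1 := by
    rw [show (4:ℕ) = 2*2 from rfl, pow_mul, Complex.I_sq]; ring
  have h3 : Complex.I^3 = -Complex.I := by
    rw [pow_succ, Complex.I_sq]; ring
  field_simp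
  ring_nf
  simp only [h4, h3, Complex.I_sq]
  ring
end

section
/- The function E(t) = Σ_{ℓ∈ℤ} exp(−2π²(ℓ+t)²) is 1-periodic, attains its maximum over ℝ at t = 0, and is decreasing on [0, 1/2]. -/
/-!
Write `E(t) = ∑ₗ exp (-c (ℓ + t)²)` and `φ(x) = x exp (-c x²)`, so that `E' = -2c ∑ₗ φ(ℓ + t)`.
Reindexing `ℓ` makes `E` 1-periodic and even, so the maximum at `0` follows from monotonicity
on `[0, 1/2]`, i.e. from `∑ₗ φ(ℓ + t) ≥ 0` there. For `c ≥ 16` (here `c = 2π²`) the Gaussian is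
so narrow that this can be read off termwise. For `t ≥ 1/4`, pairing `ℓ = n` with `ℓ = -(n + 1)`
gives `φ(n + t) - φ(n + 1 - t) ≥ 0`, as `φ` decreases on `[1/√(2c), ∞)`. For `t ≤ 1/4`, pairing
`ℓ = ±n` leaves the central term `φ(t)` plus terms `φ(n + t) - φ(n - t) ≥ -32 e^{-cn/4} φ(t)`,
whose geometric sum is dominated by `φ(t)`.
-/

open Real Set

noncomputable def periodizedGaussian (c t : ℝ) : ℝ := ∑' ℓ : ℤ, exp (-c * (ℓ + t) ^ 2)

noncomputable def mulGaussian (c x : ℝ) : ℝ := x * exp (-c * x ^ 2)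

section

variable {c : ℝ}

lemma summable_abs_pow_mul_gaussian (hc : 0 < c) (k : ℕ) (t : ℝ) :
    Summable fun ℓ : ℤ => |(ℓ : ℝ) + t| ^ k * exp (-c * (ℓ + t) ^ 2) :=
  (HurwitzKernelBounds.summable_f_int k t (div_pos hc pi_pos)).congr fun ℓ => by
    rw [HurwitzKernelBounds.f_int]
    congr 2
    field_simp

lemma summable_mulGaussian (hc : 0 < c) (t : ℝ) :
    Summable fun ℓ : ℤ => mulGaussian c (ℓ + t) :=
  (summable_abs_pow_mul_gaussian hc 1 t).of_norm_bounded fun ℓ => by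
    simp [mulGaussian]

lemma abs_mulGaussian_add_le (hc : 0 ≤ c) (a : ℝ) {y R : ℝ} (hy : |y| ≤ R) :
    |mulGaussian c (a + y)| ≤ exp (c * R ^ 2) * ((|a| + R) * exp (-(c / 2) * a ^ 2)) := by
  have hlin : |a + y| ≤ |a| + R := (abs_add_le _ _).trans (by linarith)
  have hy2 : y ^ 2 ≤ R ^ 2 := sq_le_sq' (by linarith [neg_abs_le y]) (by linarith [le_abs_self y])
  have hexp : exp (-c * (a + y) ^ 2) ≤ exp (c * R ^ 2) * exp (-(c / 2) * a ^ 2) := by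
    rw [← exp_add, exp_le_exp]
    nlinarith [mul_nonneg hc (sq_nonneg (a + 2 * y)), mul_le_mul_of_nonneg_left hy2 hc]
  rw [mulGaussian, abs_mul, abs_exp]
  calc |a + y| * exp (-c * (a + y) ^ 2)
      ≤ (|a| + R) * (exp (c * R ^ 2) * exp (-(c / 2) * a ^ 2)) := by
        gcongr; exact (abs_nonneg _).trans hlin
    _ = _ := by ring

lemma hasDerivAt_exp_neg_mul_sq (c x : ℝ) :
    HasDerivAt (fun x => exp (-c * x ^ 2)) (-2 * c * mulGaussian c x) x := by
  convert ((hasDerivAt_pow 2 x).const_mul (-c)).exp using 1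
  rw [mulGaussian]
  ring

theorem hasDerivAt_periodizedGaussian (hc : 0 < c) (x : ℝ) :
    HasDerivAt (periodizedGaussian c) (-2 * c * ∑' ℓ : ℤ, mulGaussian c (ℓ + x)) x := by
  set R := |x| + 1
  have hbound : ∀ (ℓ : ℤ), ∀ y ∈ Metric.ball x 1, ‖-2 * c * mulGaussian c (ℓ + y)‖ ≤
      2 * c * (exp (c * R ^ 2) * ((|(ℓ : ℝ)| + R) * exp (-(c / 2) * ℓ ^ 2))) := by
    intro ℓ y hy
    have hyR : |y| ≤ R := by
      rw [Metric.mem_ball, dist_eq] at hy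
      linarith [abs_sub_abs_le_abs_sub y x]
    rw [norm_mul, norm_mul, norm_neg, Real.norm_eq_abs, Real.norm_eq_abs, Real.norm_eq_abs,
      abs_two, abs_of_pos hc]
    gcongr
    exact abs_mulGaussian_add_le hc.le _ hyR
  have hu : Summable fun ℓ : ℤ =>
      2 * c * (exp (c * R ^ 2) * ((|(ℓ : ℝ)| + R) * exp (-(c / 2) * ℓ ^ 2))) := by
    have h1 := summable_abs_pow_mul_gaussian (half_pos hc) 1 0
    have h0 := summable_abs_pow_mul_gaussian (half_pos hc) 0 0
    simp only [add_zero, pow_one, pow_zero, one_mul] at h1 h0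
    exact (((h1.add (h0.mul_left R)).mul_left (exp (c * R ^ 2))).mul_left (2 * c)).congr
      fun ℓ => by ring
  rw [← tsum_mul_left]
  exact hasDerivAt_tsum_of_isPreconnected hu Metric.isOpen_ball (convex_ball x 1).isPreconnected
    (fun ℓ y _ => (hasDerivAt_exp_neg_mul_sq c (ℓ + y)).comp_const_add (ℓ : ℝ) y) hbound
    (Metric.mem_ball_self one_pos)
    (by simpa using summable_abs_pow_mul_gaussian hc 0 x) (Metric.mem_ball_self one_pos)

lemma periodizedGaussian_periodic (c : ℝ) : Function.Periodic (periodizedGaussian c) 1 :=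
  fun t => by
    unfold periodizedGaussian
    rw [← (Equiv.addRight (1 : ℤ)).tsum_eq fun ℓ : ℤ => exp (-c * (ℓ + t) ^ 2)]
    exact tsum_congr fun ℓ => by simp only [Equiv.coe_addRight]; push_cast; ring_nf

lemma periodizedGaussian_even (c : ℝ) : Function.Even (periodizedGaussian c) :=
  fun t => by
    unfold periodizedGaussian
    rw [← (Equiv.neg ℤ).tsum_eq fun ℓ : ℤ => exp (-c * (ℓ + t) ^ 2)]
    exact tsum_congr fun ℓ => by simp only [Equiv.neg_apply]; push_cast; ring_nf

lemma mulGaussian_neg (c x : ℝ) : mulGaussian c (-x) = -mulGaussian c x := by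
  simp only [mulGaussian, neg_sq, neg_mul]

lemma mulGaussian_nonneg (c : ℝ) {x : ℝ} (hx : 0 ≤ x) : 0 ≤ mulGaussian c x :=
  mul_nonneg hx (exp_pos _).le

lemma mulGaussian_le_of_le {a b : ℝ} (ha : 0 ≤ a) (hab : a ≤ b) (h : 1 ≤ c * a * (a + b)) :
    mulGaussian c b ≤ mulGaussian c a := by
  have hb : b ≤ a * exp (c * (b ^ 2 - a ^ 2)) :=
    calc b ≤ a * (c * (b ^ 2 - a ^ 2) + 1) := by
          nlinarith [mul_nonneg (sub_nonneg.2 hab) (sub_nonneg.2 h)]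
      _ ≤ a * exp (c * (b ^ 2 - a ^ 2)) := by gcongr; exact add_one_le_exp _
  calc mulGaussian c b ≤ a * exp (c * (b ^ 2 - a ^ 2)) * exp (-c * b ^ 2) := by
        rw [mulGaussian]; gcongr
    _ = mulGaussian c a := by rw [mulGaussian, mul_assoc, ← exp_add]; ring_nf

lemma mulGaussian_sub_mulGaussian_le (hc : 0 ≤ c) {x t : ℝ} (hx : 1 ≤ x) (ht0 : 0 ≤ t)
    (ht : t ≤ 1 / 4) :
    mulGaussian c (x - t) - mulGaussian c (x + t) ≤ 32 * exp (-(c / 4) * x) * mulGaussian c t := by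
  have hcx : 0 ≤ c * x := mul_nonneg hc (by linarith)
  have hcxt : 0 ≤ 4 * c * x * t := by nlinarith [mul_nonneg hcx ht0]
  have hsplit : exp (-c * (x - t) ^ 2) = exp (-c * x * (x - 2 * t)) * exp (-c * t ^ 2) := by
    rw [← exp_add]; ring_nf
  have hshift : exp (-c * (x + t) ^ 2) = exp (-c * (x - t) ^ 2) * exp (-(4 * c * x * t)) := by
    rw [← exp_add]; ring_nf
  have hpoly : 4 * c * x * (x + t) ≤ 8 * c * x ^ 2 := by nlinarith
  have hdecay : exp (-c * x * (x - 2 * t)) ≤ exp (-c * x ^ 2 / 2) := exp_le_exp.2 (by nlinarith)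
  have hlin : c * x ^ 2 / 4 ≤ exp (c * x ^ 2 / 4) := by linarith [add_one_le_exp (c * x ^ 2 / 4)]
  have hφ := mulGaussian_nonneg c ht0
  calc mulGaussian c (x - t) - mulGaussian c (x + t)
      ≤ (x + t) * (exp (-c * (x - t) ^ 2) * (1 - exp (-(4 * c * x * t)))) := by
        rw [mulGaussian, mulGaussian, hshift]
        nlinarith [exp_pos (-c * (x - t) ^ 2), exp_le_one_iff.2 (neg_nonpos.2 hcxt)]
    _ ≤ (x + t) * (exp (-c * (x - t) ^ 2) * (4 * c * x * t)) := by
        gcongr; linarith [add_one_le_exp (-(4 * c * x * t))]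
    _ = 4 * c * x * (x + t) * exp (-c * x * (x - 2 * t)) * mulGaussian c t := by
        rw [hsplit, mulGaussian]; ring
    _ ≤ 8 * c * x ^ 2 * exp (-c * x ^ 2 / 2) * mulGaussian c t :=
        mul_le_mul_of_nonneg_right (mul_le_mul hpoly hdecay (exp_pos _).le (by positivity)) hφ
    _ = 32 * (c * x ^ 2 / 4) * exp (-(c * x ^ 2 / 4)) ^ 2 * mulGaussian c t := by
        rw [← exp_nat_mul]; ring_nf
    _ ≤ 32 * exp (c * x ^ 2 / 4) * exp (-(c * x ^ 2 / 4)) ^ 2 * mulGaussian c t := by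
        gcongr
    _ = 32 * exp (-(c * x ^ 2 / 4)) * mulGaussian c t := by
        rw [exp_neg]; field_simp
    _ ≤ 32 * exp (-(c / 4) * x) * mulGaussian c t := by
        gcongr; nlinarith [mul_nonneg hcx (by linarith : 0 ≤ x - 1)]

lemma tsum_mulGaussian_nonneg_of_one_le_mul (hc : 0 < c) {t : ℝ} (hct : 1 ≤ c * t)
    (ht : t ≤ 1 / 2) : 0 ≤ ∑' ℓ : ℤ, mulGaussian c (ℓ + t) := by
  have ht0 : 0 ≤ t := by nlinarith
  rw [← tsum_nat_add_neg_add_one (summable_mulGaussian hc t)]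
  refine tsum_nonneg fun n => ?_
  have hn : (0 : ℝ) ≤ n := n.cast_nonneg
  have h : mulGaussian c (n + 1 - t) ≤ mulGaussian c (n + t) :=
    mulGaussian_le_of_le (by positivity) (by linarith) (by nlinarith [mul_nonneg hc.le hn])
  push_cast
  rw [show -((n : ℝ) + 1) + t = -(n + 1 - t) by ring, mulGaussian_neg]
  linarith

lemma hasSum_mulGaussian_add_one_sub (hc : 0 < c) (t : ℝ) :
    HasSum (fun n : ℕ => mulGaussian c (n + 1 + t) - mulGaussian c (n + 1 - t))
      ((∑' ℓ : ℤ, mulGaussian c (ℓ + t)) - mulGaussian c t) := by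
  have h := (hasSum_nat_add_iff' 1).2 (summable_mulGaussian hc t).hasSum.nat_add_neg
  simp only [Finset.sum_range_one, Nat.cast_zero, Int.cast_zero, neg_zero, zero_add,
    show ∀ a b : ℝ, a + b - (b + b) = a - b from fun a b => by ring] at h
  refine h.congr_fun fun n => ?_
  push_cast
  rw [show -((n : ℝ) + 1) + t = -(n + 1 - t) by ring, mulGaussian_neg, sub_eq_add_neg]

/-- Equivalently `32 r / (1 - r) ≤ 1` for `r = exp (-(c / 4))`. -/
lemma mul_exp_neg_div_four_le_one (hc : 16 ≤ c) : 33 * exp (-(c / 4)) ≤ 1 := by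
  have h4 : (33 : ℝ) ≤ exp 4 :=
    calc (33 : ℝ) ≤ 2.7182818283 ^ 4 := by norm_num
      _ ≤ exp 1 ^ 4 := by gcongr; exact exp_one_gt_d9.le
      _ = exp 4 := by rw [← exp_nat_mul]; norm_num
  rw [exp_neg, ← div_eq_mul_inv, div_le_one (exp_pos _)]
  exact h4.trans (exp_le_exp.2 (by linarith))

lemma tsum_mulGaussian_nonneg_of_le_quarter (hc : 16 ≤ c) {t : ℝ} (ht0 : 0 ≤ t)
    (ht : t ≤ 1 / 4) : 0 ≤ ∑' ℓ : ℤ, mulGaussian c (ℓ + t) := by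
  have hr := mul_exp_neg_div_four_le_one hc
  set r := exp (-(c / 4))
  have hφ := mulGaussian_nonneg c ht0
  have hgeom : HasSum (fun n : ℕ => -(32 * r * mulGaussian c t) * r ^ n)
      (-(32 * r * mulGaussian c t) * (1 - r)⁻¹) :=
    (hasSum_geometric_of_lt_one (exp_pos _).le (by linarith)).mul_left _
  have hterm : ∀ n : ℕ, -(32 * r * mulGaussian c t) * r ^ n ≤
      mulGaussian c (n + 1 + t) - mulGaussian c (n + 1 - t) := fun n => by
    have h := mulGaussian_sub_mulGaussian_le (c := c) (x := n + 1) (by linarith)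
      (by linarith [n.cast_nonneg (α := ℝ)]) ht0 ht
    rw [show exp (-(c / 4) * (n + 1)) = r * r ^ n by
      rw [← pow_succ', ← exp_nat_mul]; push_cast; ring_nf] at h
    linarith
  have hlow := hasSum_le hterm hgeom (hasSum_mulGaussian_add_one_sub (by linarith) t)
  have hgeom_le : 32 * r * mulGaussian c t * (1 - r)⁻¹ ≤ mulGaussian c t := by
    rw [← div_eq_mul_inv, div_le_iff₀ (by linarith)]
    nlinarith
  linarith

lemma tsum_mulGaussian_nonneg (hc : 16 ≤ c) {t : ℝ} (ht0 : 0 ≤ t) (ht : t ≤ 1 / 2) :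
    0 ≤ ∑' ℓ : ℤ, mulGaussian c (ℓ + t) := by
  rcases le_total t (1 / 4) with hq | hq
  · exact tsum_mulGaussian_nonneg_of_le_quarter hc ht0 hq
  · exact tsum_mulGaussian_nonneg_of_one_le_mul (by linarith) (by nlinarith) ht

theorem antitoneOn_periodizedGaussian (hc : 16 ≤ c) :
    AntitoneOn (periodizedGaussian c) (Icc 0 (1 / 2)) := by
  have hderiv := hasDerivAt_periodizedGaussian (c := c) (by linarith)
  refine antitoneOn_of_hasDerivWithinAt_nonpos (convex_Icc 0 (1 / 2))
    (fun x _ => (hderiv x).continuousAt.continuousWithinAt)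
    (fun x _ => (hderiv x).hasDerivWithinAt) fun x hx => ?_
  rw [interior_Icc] at hx
  nlinarith [tsum_mulGaussian_nonneg hc hx.1.le hx.2.le]

end

lemma Function.Periodic.le_apply_zero_of_even_of_antitoneOn {f : ℝ → ℝ} (hper : f.Periodic 1)
    (heven : f.Even) (hanti : AntitoneOn f (Icc 0 (1 / 2))) (t : ℝ) : f t ≤ f 0 := by
  have hs : f t = f |t - round t| := by
    rw [← hper.sub_int_mul_eq (round t), mul_one]
    rcases abs_choice (t - round t) with h | h <;> rw [h]
    exact (heven _).symm
  rw [hs]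
  exact hanti ⟨le_rfl, by norm_num⟩ ⟨abs_nonneg _, abs_sub_round t⟩ (abs_nonneg _)

/-- The function `E(t) = Σ_{ℓ∈ℤ} exp(−2π²(ℓ+t)²)` is 1-periodic, attains its
maximum over `ℝ` at `t = 0`, and is decreasing on `[0, 1/2]`. -/
theorem periodized_gaussian_properties :
    Function.Periodic
        (fun t : ℝ => ∑' ℓ : ℤ, Real.exp (-2 * Real.pi ^ 2 * ((ℓ : ℝ) + t) ^ 2)) 1 ∧
      (∀ t : ℝ, (∑' ℓ : ℤ, Real.exp (-2 * Real.pi ^ 2 * ((ℓ : ℝ) + t) ^ 2))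
          ≤ ∑' ℓ : ℤ, Real.exp (-2 * Real.pi ^ 2 * ((ℓ : ℝ) + (0:ℝ)) ^ 2)) ∧
      AntitoneOn (fun t : ℝ => ∑' ℓ : ℤ, Real.exp (-2 * Real.pi ^ 2 * ((ℓ : ℝ) + t) ^ 2))
        (Set.Icc 0 (1/2)) := by
  have hE : ∀ t : ℝ, ∑' ℓ : ℤ, exp (-2 * π ^ 2 * ((ℓ : ℝ) + t) ^ 2) =
      periodizedGaussian (2 * π ^ 2) t := fun t => by
    simp only [periodizedGaussian, neg_mul]
  have hc : (16 : ℝ) ≤ 2 * π ^ 2 := by nlinarith [pi_gt_three]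
  simp only [hE]
  have hper := periodizedGaussian_periodic (2 * π ^ 2)
  have hanti := antitoneOn_periodizedGaussian hc
  exact ⟨hper, hper.le_apply_zero_of_even_of_antitoneOn (periodizedGaussian_even _) hanti, hanti⟩
end

section
/- Let f be a 1-periodic function with absolutely convergent Fourier series, with norm ‖f‖ = Σ_{k∈ℤ}|f̂_k|. Then for every positive integer n the Gaussian quasi-interpolant satisfies ‖Q_{1/n} f‖ ≤ a·‖f‖ where a = 1 + 3·exp(−2π²), using the norm on the Wiener algebra of absolutely convergent Fourier series. -/
open Real

set_option maxHeartbeats 1000000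

private lemma exp_le_inv_one_sub {x : ℝ} (hx : x < 1) : Real.exp x ≤ (1 - x)⁻¹ := by
  have h1 : 1 - x ≤ Real.exp (-x) := by
    have := Real.add_one_le_exp (-x); linarith
  have h2 : 0 < 1 - x := by linarith
  have h3 : Real.exp x = (Real.exp (-x))⁻¹ := by
    rw [Real.exp_neg, inv_inv]
  rw [h3]
  exact inv_anti₀ h2 h1

private lemma exp_neg_le_one_sub_half {x : ℝ} (h0 : 0 ≤ x) (h1 : x ≤ 1) :
    Real.exp (-x) ≤ 1 - x / 2 := by
  have h2 : Real.exp (-x) ≤ (1 + x)⁻¹ := by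
    have := Real.add_one_le_exp x
    rw [Real.exp_neg]
    exact inv_anti₀ (by linarith) (by linarith)
  refine h2.trans ?_
  rw [inv_le_iff_one_le_mul₀ (by linarith)]
  nlinarith

private lemma exp_neg_le_inv_sq {x : ℝ} (h0 : 0 ≤ x) :
    Real.exp (-x) ≤ ((1 + x / 2) ^ 2)⁻¹ := by
  have h1 : (1 + x / 2) ^ 2 ≤ Real.exp x := by
    have h2 := Real.add_one_le_exp (x / 2)
    have h3 : Real.exp x = Real.exp (x / 2) ^ 2 := by
      rw [← Real.exp_nat_mul]; ring_nf
    rw [h3]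
    have : 0 ≤ 1 + x / 2 := by linarith
    nlinarith [Real.exp_pos (x/2)]
  rw [Real.exp_neg]
  exact inv_anti₀ (by positivity) h1

private lemma a_lb : (19.7 : ℝ) ≤ 2 * π ^ 2 := by
  nlinarith [Real.pi_gt_d6]

private lemma a_ub : 2 * π ^ 2 ≤ 20 := by
  nlinarith [Real.pi_lt_d2, Real.pi_pos]

private lemma main_term_bound {u : ℝ} (h0 : 0 ≤ u) (h1 : u ≤ 1 / 2) :
    Real.exp (-(2 * π ^ 2) * u ^ 2) + Real.exp (-(2 * π ^ 2) * (1 - u) ^ 2)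
      ≤ 1 + 1.5 * Real.exp (-(2 * π ^ 2)) := by
  set a : ℝ := 2 * π ^ 2 with ha
  have ha1 : (19.7 : ℝ) ≤ a := a_lb
  have ha2 : a ≤ 20 := a_ub
  rcases le_or_gt u (1/200) with hu | hu
  · -- tiny u
    have e1 : Real.exp (-a * u ^ 2) ≤ 1 := by
      rw [Real.exp_le_one_iff]; nlinarith
    have e2 : Real.exp (-a * (1 - u) ^ 2) ≤ 1.5 * Real.exp (-a) := by
      have split : Real.exp (-a * (1 - u) ^ 2) = Real.exp (a * (2 * u - u ^ 2)) * Real.exp (-a) := by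
        rw [← Real.exp_add]; ring_nf
      rw [split]
      have hx : a * (2 * u - u ^ 2) ≤ 0.2 := by nlinarith
      have : Real.exp (a * (2 * u - u ^ 2)) ≤ (1 - (0.2:ℝ))⁻¹ :=
        (Real.exp_le_exp.mpr hx).trans (exp_le_inv_one_sub (by norm_num))
      have h15 : Real.exp (a * (2 * u - u ^ 2)) ≤ 1.5 := this.trans (by norm_num)
      nlinarith [Real.exp_pos (-a)]
    linarith
  · rcases le_or_gt u (1/10) with hu2 | hu2
    · -- middle small u
      have hx1 : (19.7:ℝ)/40000 ≤ a * u ^ 2 := by nlinarith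
      have hx2 : a * u ^ 2 ≤ 1 := by nlinarith
      have e1 : Real.exp (-a * u ^ 2) ≤ 1 - 19.7/80000 := by
        have := exp_neg_le_one_sub_half (x := a * u ^ 2) (by nlinarith) hx2
        rw [show -a * u ^ 2 = -(a * u ^ 2) by ring]
        linarith
      have e2 : Real.exp (-a * (1 - u) ^ 2) ≤ 19.7/80000 := by
        have h15 : (15:ℝ) ≤ a * (1 - u) ^ 2 := by nlinarith
        have : Real.exp (-a * (1 - u) ^ 2) ≤ Real.exp (-15) := by
          apply Real.exp_le_exp.mpr; linarith
        refine this.trans ?_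
        have he2 : (2:ℝ) ≤ Real.exp 1 := by
          have := Real.add_one_le_exp (1:ℝ); linarith
        have hp : (2:ℝ) ^ (15:ℕ) ≤ Real.exp 1 ^ (15:ℕ) :=
          pow_le_pow_left₀ (by norm_num) he2 15
        have hexp15 : Real.exp 15 = Real.exp 1 ^ (15:ℕ) := by
          rw [← Real.exp_nat_mul]; norm_num
        have : Real.exp (-15) ≤ ((2:ℝ) ^ (15:ℕ))⁻¹ := by
          rw [Real.exp_neg, hexp15]
          exact inv_anti₀ (by positivity) hp
        refine this.trans ?_; norm_num
      have : Real.exp (-a * u ^ 2) + Real.exp (-a * (1 - u) ^ 2) ≤ 1 := by linarith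
      nlinarith [Real.exp_pos (-a)]
    · -- large u
      have e1 : Real.exp (-a * u ^ 2) ≤ (((1:ℝ) + 19.7/200) ^ 2)⁻¹ := by
        have hx : (19.7:ℝ)/100 ≤ a * u ^ 2 := by nlinarith
        have := exp_neg_le_inv_sq (x := a * u ^ 2) (by nlinarith)
        rw [show -a * u ^ 2 = -(a * u ^ 2) by ring]
        refine this.trans (inv_anti₀ (by positivity) ?_)
        apply pow_le_pow_left₀ (by norm_num)
        linarith
      have e2 : Real.exp (-a * (1 - u) ^ 2) ≤ (((1:ℝ) + 19.7/8) ^ 2)⁻¹ := by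
        have hx : (19.7:ℝ)/4 ≤ a * (1 - u) ^ 2 := by nlinarith
        have := exp_neg_le_inv_sq (x := a * (1 - u) ^ 2) (by nlinarith)
        rw [show -a * (1 - u) ^ 2 = -(a * (1 - u) ^ 2) by ring]
        refine this.trans (inv_anti₀ (by positivity) ?_)
        apply pow_le_pow_left₀ (by norm_num)
        linarith
      have g1 : (((1:ℝ) + 19.7/200) ^ 2)⁻¹ ≤ 0.83 := by norm_num
      have g2 : (((1:ℝ) + 19.7/8) ^ 2)⁻¹ ≤ 0.09 := by norm_num
      have : Real.exp (-a * u ^ 2) + Real.exp (-a * (1 - u) ^ 2) ≤ 1 := by linarith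
      nlinarith [Real.exp_pos (-a)]

private lemma gauss_summable (t : ℝ) :
    Summable fun ℓ : ℤ => Real.exp (-(2 * π ^ 2) * (t + ℓ) ^ 2) := by
  have ha1 : (19.7 : ℝ) ≤ 2 * π ^ 2 := a_lb
  set a : ℝ := 2 * π ^ 2 with ha
  have hr : Real.exp (-(a/2)) < 1 := by
    rw [Real.exp_lt_one_iff]; linarith
  have hr0 : 0 ≤ Real.exp (-(a/2)) := (Real.exp_pos _).le
  have key : ∀ m : ℤ, Real.exp (-a * (t + m) ^ 2)
      ≤ Real.exp (a * t ^ 2) * Real.exp (-(a/2)) ^ m.natAbs := by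
    intro m
    rw [← Real.exp_nat_mul, ← Real.exp_add]
    apply Real.exp_le_exp.mpr
    have h1 : (m.natAbs : ℝ) = |(m : ℝ)| := by
      rw [Nat.cast_natAbs, Int.cast_abs]
    have h2 : |(m:ℝ)| ≤ (m:ℝ) ^ 2 := by
      rcases eq_or_ne m 0 with rfl | hm
      · simp
      · have : (1:ℝ) ≤ |(m:ℝ)| := by
          have := Int.one_le_abs hm
          calc (1:ℝ) = ((1:ℤ):ℝ) := by norm_num
            _ ≤ ((|m|:ℤ):ℝ) := by exact_mod_cast this
            _ = |(m:ℝ)| := by push_cast; ring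
        nlinarith [sq_abs (m:ℝ)]
    rw [h1]
    have h3 : |(m:ℝ)| / 2 ≤ (t + m) ^ 2 + t ^ 2 := by
      nlinarith [sq_nonneg (t + (m:ℝ)/2)]
    have ha0 : (0:ℝ) < a := by linarith
    nlinarith [mul_le_mul_of_nonneg_left h3 ha0.le]
  have hmaj : Summable fun m : ℤ => Real.exp (a * t ^ 2) * Real.exp (-(a/2)) ^ m.natAbs := by
    apply Summable.mul_left
    exact Summable.of_nat_of_neg (by simpa using summable_geometric_of_lt_one hr0 hr)
      (by simpa using summable_geometric_of_lt_one hr0 hr)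
  exact Summable.of_nonneg_of_le (fun m => (Real.exp_pos _).le) key hmaj


private lemma theta_half {u : ℝ} (h0 : 0 ≤ u) (h1 : u ≤ 1 / 2) :
    (∑' ℓ : ℤ, Real.exp (-(2 * π ^ 2) * (u + ℓ) ^ 2))
      ≤ 1 + 3 * Real.exp (-(2 * π ^ 2)) := by
  have ha1 : (19.7 : ℝ) ≤ 2 * π ^ 2 := a_lb
  set a : ℝ := 2 * π ^ 2 with ha
  have ha0 : (0:ℝ) < a := by linarith
  set q : ℝ := Real.exp (-a) with hqdef
  have hq0 : 0 < q := Real.exp_pos _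
  have hq5 : q ≤ 1/20 := by
    rw [hqdef, Real.exp_neg]
    have := Real.add_one_le_exp a
    exact inv_le_of_inv_le₀ (by norm_num) (by linarith)
  have hq1 : q < 1 := by linarith
  set P : ℕ → ℝ := fun n => Real.exp (-a * (u + (n:ℝ)) ^ 2) with hP
  set N : ℕ → ℝ := fun n => Real.exp (-a * (u - ((n:ℝ) + 1)) ^ 2) with hN
  have hgeo : Summable fun n : ℕ => q ^ n := summable_geometric_of_lt_one hq0.le hq1
  have hPle : ∀ n : ℕ, P n ≤ q ^ n := by
    intro n
    have hqn : (q : ℝ) ^ n = Real.exp (-a * (n:ℝ)) := by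
      rw [hqdef, ← Real.exp_nat_mul]; ring_nf
    rw [hqn, hP]
    apply Real.exp_le_exp.mpr
    have hn : (0:ℝ) ≤ n := Nat.cast_nonneg n
    have h3 : (n:ℝ) ≤ (u + (n:ℝ)) ^ 2 := by
      rcases Nat.eq_zero_or_pos n with rfl | hpos
      · push_cast; nlinarith [sq_nonneg u]
      · have : (1:ℝ) ≤ n := by exact_mod_cast hpos
        nlinarith
    nlinarith [mul_le_mul_of_nonneg_left h3 ha0.le]
  have hNle : ∀ n : ℕ, N n ≤ q ^ n := by
    intro n
    have hqn : (q : ℝ) ^ n = Real.exp (-a * (n:ℝ)) := by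
      rw [hqdef, ← Real.exp_nat_mul]; ring_nf
    rw [hqn, hN]
    apply Real.exp_le_exp.mpr
    have hn : (0:ℝ) ≤ n := Nat.cast_nonneg n
    have h3 : (n:ℝ) ≤ (u - ((n:ℝ) + 1)) ^ 2 := by
      rcases Nat.eq_zero_or_pos n with rfl | hpos
      · push_cast; nlinarith [sq_nonneg (u - 1)]
      · have : (1:ℝ) ≤ n := by exact_mod_cast hpos
        nlinarith
    nlinarith [mul_le_mul_of_nonneg_left h3 ha0.le]
  have hPs : Summable P := hgeo.of_nonneg_of_le (fun n => (Real.exp_pos _).le) hPle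
  have hNs : Summable N := hgeo.of_nonneg_of_le (fun n => (Real.exp_pos _).le) hNle
  have hf1 : Summable fun n : ℕ => Real.exp (-a * (u + ((n:ℤ):ℝ)) ^ 2) := by
    apply hPs.congr; intro n; rw [hP]; push_cast; ring_nf
  have hf2 : Summable fun n : ℕ => Real.exp (-a * (u + ((-((n:ℤ) + 1) : ℤ):ℝ)) ^ 2) := by
    apply hNs.congr; intro n; rw [hN]; push_cast; ring_nf
  rw [tsum_of_nat_of_neg_add_one (f := fun ℓ : ℤ => Real.exp (-a * (u + ℓ) ^ 2)) hf1 hf2]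
  have ePos : (∑' n : ℕ, Real.exp (-a * (u + ((n:ℤ):ℝ)) ^ 2)) = ∑' n : ℕ, P n :=
    tsum_congr fun n => by rw [hP]; push_cast; ring_nf
  have eNeg : (∑' n : ℕ, Real.exp (-a * (u + ((-((n:ℤ) + 1) : ℤ):ℝ)) ^ 2)) = ∑' n : ℕ, N n :=
    tsum_congr fun n => by rw [hN]; push_cast; ring_nf
  rw [ePos, eNeg]
  -- split off the first terms
  have hPs1 : Summable fun n : ℕ => P (n + 1) := by
    exact (summable_nat_add_iff (f := P) 1).2 hPs
  have hNs1 : Summable fun n : ℕ => N (n + 1) := by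
    exact (summable_nat_add_iff (f := N) 1).2 hNs
  have hgq : Summable fun n : ℕ => q * q ^ n := hgeo.mul_left q
  have hgq2 : Summable fun n : ℕ => q ^ 2 * q ^ n := hgeo.mul_left _
  have hPtail : (∑' n : ℕ, P (n + 1)) ≤ q * (1 - q)⁻¹ := by
    have hb : ∀ n : ℕ, P (n + 1) ≤ q * q ^ n := by
      intro n
      have : q * q ^ n = q ^ (n + 1) := by ring
      rw [this]
      exact hPle (n + 1)
    have := Summable.tsum_le_tsum hb hPs1 hgq
    rwa [tsum_mul_left, tsum_geometric_of_lt_one hq0.le hq1] at this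
  have hNtail : (∑' n : ℕ, N (n + 1)) ≤ q ^ 2 * (1 - q)⁻¹ := by
    have hb : ∀ n : ℕ, N (n + 1) ≤ q ^ 2 * q ^ n := by
      intro n
      have e1 : q ^ 2 * q ^ n = q ^ (n + 2) := by ring
      have hqn : q ^ (n + 2) = Real.exp (-a * ((n:ℝ) + 2)) := by
        rw [hqdef, ← Real.exp_nat_mul]; push_cast; ring_nf
      rw [e1, hqn, hN]
      apply Real.exp_le_exp.mpr
      have hn : (0:ℝ) ≤ n := Nat.cast_nonneg n
      push_cast
      have h3 : ((n:ℝ) + 2) ≤ (u - ((n:ℝ) + 1 + 1)) ^ 2 := by nlinarith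
      nlinarith [mul_le_mul_of_nonneg_left h3 ha0.le]
    have := Summable.tsum_le_tsum hb hNs1 hgq2
    rwa [tsum_mul_left, tsum_geometric_of_lt_one hq0.le hq1] at this
  have hPsum : (∑' n : ℕ, P n) ≤ P 0 + q * (1 - q)⁻¹ := by
    rw [Summable.tsum_eq_zero_add hPs]
    linarith
  have hNsum : (∑' n : ℕ, N n) ≤ N 0 + q ^ 2 * (1 - q)⁻¹ := by
    rw [Summable.tsum_eq_zero_add hNs]
    linarith
  have hP0 : P 0 = Real.exp (-a * u ^ 2) := by rw [hP]; norm_num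
  have hN0 : N 0 = Real.exp (-a * (1 - u) ^ 2) := by
    have : N 0 = Real.exp (-a * (u - ((0:ℕ):ℝ) - 1) ^ 2) := by rw [hN]; ring_nf
    rw [this]; congr 1; push_cast; ring
  have main := main_term_bound h0 h1
  rw [← ha] at main
  rw [hP0] at hPsum; rw [hN0] at hNsum
  have tail : q * (1 - q)⁻¹ + q ^ 2 * (1 - q)⁻¹ ≤ 1.5 * q := by
    have h1q : (0:ℝ) < 1 - q := by linarith
    rw [← add_mul, ← div_eq_mul_inv, div_le_iff₀ h1q]
    nlinarith
  linarith

private lemma theta_bound (t : ℝ) :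
    (∑' ℓ : ℤ, Real.exp (-(2 * π ^ 2) * (t + ℓ) ^ 2))
      ≤ 1 + 3 * Real.exp (-(2 * π ^ 2)) := by
  set a : ℝ := 2 * π ^ 2 with ha
  set m : ℤ := round t with hm
  set v : ℝ := t - m with hv
  have hv2 : |v| ≤ 1/2 := by rw [hv, hm]; exact abs_sub_round t
  have step1 : (∑' ℓ : ℤ, Real.exp (-a * (t + ℓ) ^ 2))
      = ∑' ℓ : ℤ, Real.exp (-a * (v + ℓ) ^ 2) := by
    rw [← Equiv.tsum_eq (Equiv.subRight m) (fun ℓ : ℤ => Real.exp (-a * (t + ℓ) ^ 2))]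
    apply tsum_congr
    intro ℓ
    congr 1
    have : ((Equiv.subRight m ℓ : ℤ) : ℝ) = (ℓ : ℝ) - (m : ℝ) := by
      simp [Equiv.subRight]
    rw [this, hv]
    ring
  rw [step1]
  rcases le_or_gt 0 v with h0 | h0
  · exact theta_half h0 (by cases abs_le.mp hv2; assumption)
  · have step2 : (∑' ℓ : ℤ, Real.exp (-a * (v + ℓ) ^ 2))
        = ∑' ℓ : ℤ, Real.exp (-a * (-v + ℓ) ^ 2) := by
      rw [← Equiv.tsum_eq (Equiv.neg ℤ) (fun ℓ : ℤ => Real.exp (-a * (-v + ℓ) ^ 2))]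
      apply tsum_congr
      intro ℓ
      congr 1
      have : ((Equiv.neg ℤ ℓ : ℤ) : ℝ) = -(ℓ : ℝ) := by simp
      rw [this]
      ring
    rw [step2]
    refine theta_half (by linarith) ?_
    have := (abs_le.mp hv2).1
    linarith

/-- Boundedness of the Gaussian quasi-interpolant in the Wiener norm.
If `f` has absolutely summable Fourier coefficients `c : ℤ → ℂ`
(`‖f‖ = Σ_k |c k|`), then the quasi-interpolant
`Q_{1/n} f = Σ_k c_k Σ_ℓ ψ̂(ℓ + k/n) e_{k+nℓ}` has Fourier coefficient
`ψ̂(p/n) Σ_ℓ c_{p−nℓ}` at frequency `p`, and its Wiener norm is bounded by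
`a ‖f‖` with `a = 1 + 3 e^{−2π²}`. -/
theorem quasi_interpolant_wiener_bound (n : ℕ) (hn : 0 < n) (c : ℤ → ℂ)
    (hc : Summable fun k : ℤ => ‖c k‖) :
    (∑' p : ℤ, ‖(Real.exp (-2 * Real.pi ^ 2 * ((p : ℝ) / n) ^ 2) : ℂ) *
        ∑' ℓ : ℤ, c (p - n * ℓ)‖)
      ≤ (1 + 3 * Real.exp (-2 * Real.pi ^ 2)) * ∑' k : ℤ, ‖c k‖ := by
  have hn0 : (n : ℝ) ≠ 0 := Nat.cast_ne_zero.mpr hn.ne'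
  have hnz : (n : ℤ) ≠ 0 := Int.natCast_ne_zero.mpr hn.ne'
  set B : ℝ := 1 + 3 * Real.exp (-(2 * π ^ 2)) with hB
  have hB' : (1 + 3 * Real.exp (-2 * Real.pi ^ 2)) = B := by rw [hB]; ring_nf
  rw [hB']
  set F : ℤ × ℤ → ℝ := fun q => Real.exp (-(2 * π ^ 2) * ((q.1 : ℝ) / n + q.2) ^ 2) * ‖c q.1‖
    with hF
  have hFnn : 0 ≤ F := fun q => mul_nonneg (Real.exp_pos _).le (norm_nonneg _)
  have hslice : ∀ k : ℤ, Summable fun ℓ : ℤ => F (k, ℓ) := fun k =>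
    (gauss_summable ((k : ℝ) / n)).mul_right ‖c k‖
  have hrowbound : ∀ k : ℤ, (∑' ℓ : ℤ, F (k, ℓ)) ≤ B * ‖c k‖ := by
    intro k
    have : (∑' ℓ : ℤ, F (k, ℓ))
        = (∑' ℓ : ℤ, Real.exp (-(2 * π ^ 2) * ((k : ℝ) / n + ℓ) ^ 2)) * ‖c k‖ := by
      simp only [hF]; exact tsum_mul_right
    rw [this, hB]
    exact mul_le_mul_of_nonneg_right (theta_bound _) (norm_nonneg _)
  have hrow : Summable fun k : ℤ => ∑' ℓ : ℤ, F (k, ℓ) := by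
    apply Summable.of_nonneg_of_le (fun k => tsum_nonneg fun ℓ => hFnn (k, ℓ)) hrowbound
    exact hc.mul_left B
  have hFsum : Summable F := (summable_prod_of_nonneg hFnn).2 ⟨hslice, hrow⟩
  -- the shear equivalence
  set e : ℤ × ℤ ≃ ℤ × ℤ :=
    { toFun := fun q => (q.1 - n * q.2, q.2)
      invFun := fun q => (q.1 + n * q.2, q.2)
      left_inv := by rintro ⟨p, ℓ⟩; simp
      right_inv := by rintro ⟨p, ℓ⟩; simp } with he
  have hFe : Summable fun q : ℤ × ℤ => F (e q) := e.summable_iff.2 hFsum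
  have hcompute : ∀ p ℓ : ℤ,
      F (e (p, ℓ)) = Real.exp (-2 * π ^ 2 * ((p : ℝ) / n) ^ 2) * ‖c (p - n * ℓ)‖ := by
    intro p ℓ
    have harg : ((p - n * ℓ : ℤ) : ℝ) / n + (ℓ : ℝ) = (p : ℝ) / n := by
      push_cast
      field_simp
      ring
    have : F (e (p, ℓ))
        = Real.exp (-(2 * π ^ 2) * (((p - n * ℓ : ℤ) : ℝ) / n + (ℓ : ℝ)) ^ 2)
          * ‖c (p - n * ℓ)‖ := rfl
    rw [this, harg]
    ring_nf
  have hslice' : ∀ p : ℤ, Summable fun ℓ : ℤ => F (e (p, ℓ)) := by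
    intro p
    have := (summable_prod_of_nonneg (fun q => hFnn (e q))).1 hFe
    exact this.1 p
  have hrow' : Summable fun p : ℤ => ∑' ℓ : ℤ, F (e (p, ℓ)) := by
    have := (summable_prod_of_nonneg (fun q => hFnn (e q))).1 hFe
    exact this.2
  have key1 : ∀ p : ℤ,
      ‖(Real.exp (-2 * Real.pi ^ 2 * ((p : ℝ) / n) ^ 2) : ℂ) * ∑' ℓ : ℤ, c (p - n * ℓ)‖
        ≤ ∑' ℓ : ℤ, F (e (p, ℓ)) := by
    intro p
    have hinj : Function.Injective fun ℓ : ℤ => p - n * ℓ := by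
      intro x y hxy
      simp only at hxy
      have h2 : (n : ℤ) * x = (n : ℤ) * y := by linarith
      exact mul_left_cancel₀ hnz h2
    have hsn : Summable fun ℓ : ℤ => ‖c (p - n * ℓ)‖ := hc.comp_injective hinj
    calc ‖(Real.exp (-2 * Real.pi ^ 2 * ((p : ℝ) / n) ^ 2) : ℂ) * ∑' ℓ : ℤ, c (p - n * ℓ)‖
        = Real.exp (-2 * Real.pi ^ 2 * ((p : ℝ) / n) ^ 2) * ‖∑' ℓ : ℤ, c (p - n * ℓ)‖ := by
          rw [norm_mul, Complex.norm_real, Real.norm_eq_abs,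
            abs_of_pos (Real.exp_pos _)]
      _ ≤ Real.exp (-2 * Real.pi ^ 2 * ((p : ℝ) / n) ^ 2) * ∑' ℓ : ℤ, ‖c (p - n * ℓ)‖ :=
          mul_le_mul_of_nonneg_left (norm_tsum_le_tsum_norm hsn) (Real.exp_pos _).le
      _ = ∑' ℓ : ℤ, F (e (p, ℓ)) := by
          rw [← tsum_mul_left]
          exact tsum_congr fun ℓ => (hcompute p ℓ).symm
  have hLHS : Summable fun p : ℤ =>
      ‖(Real.exp (-2 * Real.pi ^ 2 * ((p : ℝ) / n) ^ 2) : ℂ) * ∑' ℓ : ℤ, c (p - n * ℓ)‖ :=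
    Summable.of_nonneg_of_le (fun p => norm_nonneg _) key1 hrow'
  calc (∑' p : ℤ, ‖(Real.exp (-2 * Real.pi ^ 2 * ((p : ℝ) / n) ^ 2) : ℂ) *
        ∑' ℓ : ℤ, c (p - n * ℓ)‖)
      ≤ ∑' p : ℤ, ∑' ℓ : ℤ, F (e (p, ℓ)) := Summable.tsum_le_tsum key1 hLHS hrow'
    _ = ∑' q : ℤ × ℤ, F (e q) := (Summable.tsum_prod' hFe hslice').symm
    _ = ∑' q : ℤ × ℤ, F q := e.tsum_eq F
    _ = ∑' k : ℤ, ∑' ℓ : ℤ, F (k, ℓ) := Summable.tsum_prod' hFsum hslice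
    _ ≤ ∑' k : ℤ, B * ‖c k‖ := Summable.tsum_le_tsum hrowbound hrow (hc.mul_left B)
    _ = B * ∑' k : ℤ, ‖c k‖ := tsum_mul_left
end

section
/- Let ψ̂(t) = exp(−2π²t²) and h = 1/2^ℓ with integer ℓ ≥ 2, and let m < 2^{ℓ−1} be a positive integer (so 0 < hm < 1/2). Then the remainder g₁ of the level-one quasi-interpolation error of c_m, g₁ = −ψ̂(hm+2)c_{m+1/h} − Σ_{k≥3}(ψ̂(hm+k)c_{m+k/h} + ψ̂(hm−k)c_{m−k/h}), satisfies ‖g₁‖ ≤ ψ̂(2) + Σ_{k=3}^∞ (ψ̂(k) + ψ̂(k − 1/2)) ≤ 2·ψ̂(2). -/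
/-!
Since `ψ̂` is even and decreasing on `[0, ∞)` and `0 ≤ hm ≤ 1/2`, the series is dominated
termwise: `ψ̂(hm + k) ≤ ψ̂(k)` and `|ψ̂(hm − k)| = ψ̂(k − hm) ≤ ψ̂(k − 1/2)`. For the numerical
bound, `(k + c)² ≥ c² + 2ck` gives `ψ̂(k + c) ≤ ψ̂(c) e^{−4π²ck}`, so the tail is at most
`2ψ̂(5/2)/(1 − e^{−10π²}) = 2ψ̂(2) e^{−9π²/2}/(1 − e^{−10π²})`, far below `ψ̂(2)`.
-/

open Real

noncomputable def psiHat (t : ℝ) : ℝ := exp (-2 * π ^ 2 * t ^ 2)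

lemma psiHat_pos (t : ℝ) : 0 < psiHat t := exp_pos _

lemma psiHat_neg (t : ℝ) : psiHat (-t) = psiHat t := by
  simp only [psiHat, neg_sq]

lemma psiHat_le_psiHat_of_le {x y : ℝ} (hx : 0 ≤ x) (hxy : x ≤ y) : psiHat y ≤ psiHat x := by
  have hsq : x ^ 2 ≤ y ^ 2 := pow_le_pow_left₀ hx hxy 2
  exact exp_le_exp.2 (by nlinarith [sq_nonneg π])

lemma psiHat_nat_add_le (c : ℝ) (k : ℕ) :
    psiHat (k + c) ≤ psiHat c * exp (-4 * π ^ 2 * c) ^ k := by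
  unfold psiHat
  rw [← exp_nat_mul, ← exp_add]
  apply exp_le_exp.2
  nlinarith [mul_nonneg (sq_nonneg (k : ℝ)) (sq_nonneg π)]

section NatAdd

variable {c : ℝ}

lemma exp_neg_four_pi_sq_mul_lt_one (hc : 0 < c) : exp (-4 * π ^ 2 * c) < 1 :=
  exp_lt_one_iff.2 (by nlinarith [pi_pos, mul_pos (sq_pos_of_pos pi_pos) hc])

lemma summable_psiHat_nat_add (hc : 0 < c) : Summable fun k : ℕ => psiHat (k + c) :=
  .of_nonneg_of_le (fun _ => (psiHat_pos _).le) (psiHat_nat_add_le c)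
    ((summable_geometric_of_lt_one (exp_pos _).le
      (exp_neg_four_pi_sq_mul_lt_one hc)).mul_left _)

lemma tsum_psiHat_nat_add_le (hc : 0 < c) :
    ∑' k : ℕ, psiHat (k + c) ≤ psiHat c * (1 - exp (-4 * π ^ 2 * c))⁻¹ := by
  have hq := exp_neg_four_pi_sq_mul_lt_one hc
  rw [← tsum_geometric_of_lt_one (exp_pos _).le hq, ← tsum_mul_left]
  exact (summable_psiHat_nat_add hc).tsum_le_tsum (psiHat_nat_add_le c)
    ((summable_geometric_of_lt_one (exp_pos _).le hq).mul_left _)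

end NatAdd

lemma summable_psiHat_tail :
    Summable fun k : ℕ => psiHat (k + 3) + psiHat (k + 3 - 1 / 2) :=
  (summable_psiHat_nat_add (by norm_num)).add
    ((summable_psiHat_nat_add (c := 5 / 2) (by norm_num)).congr fun k => by ring_nf)

lemma two_mul_psiHat_five_halves_mul_le :
    2 * (psiHat (5 / 2) * (1 - exp (-4 * π ^ 2 * (5 / 2)))⁻¹) ≤ psiHat 2 := by
  set e := exp (-(9 / 2) * π ^ 2)
  have hpi : 9 < π ^ 2 := by nlinarith [pi_gt_three]
  have hsplit : psiHat (5 / 2) = psiHat 2 * e := by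
    rw [psiHat, psiHat, ← exp_add]; ring_nf
  have he : e ≤ 1 / 3 := by
    have h2 : exp (-2) ≤ 1 / 3 := by
      rw [exp_neg, inv_le_comm₀ (exp_pos _) (by norm_num)]
      linarith [add_one_le_exp (2 : ℝ)]
    exact (exp_le_exp.2 (by linarith)).trans h2
  have hq : exp (-4 * π ^ 2 * (5 / 2)) ≤ e := exp_le_exp.2 (by linarith)
  rw [hsplit, ← div_eq_mul_inv, mul_div_assoc', div_le_iff₀ (by linarith)]
  nlinarith [psiHat_pos 2]

lemma psiHat_two_add_tsum_tail_le :
    psiHat 2 + ∑' k : ℕ, (psiHat (k + 3) + psiHat (k + 3 - 1 / 2)) ≤ 2 * psiHat 2 := by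
  have htail : ∑' k : ℕ, (psiHat (k + 3) + psiHat (k + 3 - 1 / 2))
      ≤ 2 * ∑' k : ℕ, psiHat (k + 5 / 2) := by
    rw [← tsum_mul_left]
    refine summable_psiHat_tail.tsum_le_tsum (fun k => ?_)
      ((summable_psiHat_nat_add (by norm_num)).mul_left 2)
    have hk : (0 : ℝ) ≤ k := k.cast_nonneg
    rw [show (k : ℝ) + 3 - 1 / 2 = k + 5 / 2 by ring, two_mul]
    gcongr
    exact psiHat_le_psiHat_of_le (by linarith) (by linarith)
  have := tsum_psiHat_nat_add_le (c := 5 / 2) (by norm_num)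
  linarith [two_mul_psiHat_five_halves_mul_le]

lemma remainder_le_of_nonneg_of_le_half {a : ℝ} (ha0 : 0 ≤ a) (ha : a ≤ 1 / 2) :
    psiHat (a + 2) + ∑' k : ℕ, (psiHat (a + (k + 3)) + |psiHat (a - (k + 3))|)
      ≤ psiHat 2 + ∑' k : ℕ, (psiHat (k + 3) + psiHat (k + 3 - 1 / 2)) := by
  have hreflect : ∀ k : ℕ, |psiHat (a - (k + 3))| = psiHat (k + 3 - a) := fun k => by
    rw [abs_of_pos (psiHat_pos _), ← psiHat_neg, neg_sub]
  have summable_left : Summable fun k : ℕ => psiHat (a + (k + 3)) + |psiHat (a - (k + 3))| := by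
    simp only [hreflect, add_sub_assoc]
    exact ((summable_psiHat_nat_add (c := a + 3) (by linarith)).congr fun k => by ring_nf).add
      (summable_psiHat_nat_add (by linarith))
  gcongr ?_ + ?_
  · exact psiHat_le_psiHat_of_le (by norm_num) (by linarith)
  · refine summable_left.tsum_le_tsum (fun k => ?_) summable_psiHat_tail
    have hk : (0 : ℝ) ≤ k := k.cast_nonneg
    rw [hreflect]
    gcongr ?_ + ?_ <;> exact psiHat_le_psiHat_of_le (by linarith) (by linarith)

lemma one_div_two_pow_mul_le_half {l m : ℕ} (hl : 1 ≤ l) (hm : m < 2 ^ (l - 1)) :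
    1 / 2 ^ l * (m : ℝ) ≤ 1 / 2 := by
  have hpow : (2 : ℝ) ^ l = 2 * 2 ^ (l - 1) := by
    rw [← pow_succ']; congr 1; omega
  have hmr : (m : ℝ) ≤ 2 ^ (l - 1) := by exact_mod_cast hm.le
  rw [hpow, div_mul_eq_mul_div, one_mul, div_le_div_iff₀ (by positivity) two_pos]
  linarith

theorem remainder_level_one_bound_general (l : ℕ) (hl : 2 ≤ l) (m : ℕ)
    (hm : m < 2 ^ (l - 1)) (h : ℝ) (hh : h = 1 / 2 ^ l) :
    Real.exp (-2 * Real.pi ^ 2 * (h * m + 2) ^ 2) +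
        (∑' k : ℕ, (Real.exp (-2 * Real.pi ^ 2 * (h * m + ((k : ℝ) + 3)) ^ 2) +
          |Real.exp (-2 * Real.pi ^ 2 * (h * m - ((k : ℝ) + 3)) ^ 2)|))
      ≤ Real.exp (-2 * Real.pi ^ 2 * (2 : ℝ) ^ 2) +
        (∑' k : ℕ, (Real.exp (-2 * Real.pi ^ 2 * ((k : ℝ) + 3) ^ 2) +
          Real.exp (-2 * Real.pi ^ 2 * (((k : ℝ) + 3) - 1 / 2) ^ 2))) ∧
    Real.exp (-2 * Real.pi ^ 2 * (2 : ℝ) ^ 2) +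
        (∑' k : ℕ, (Real.exp (-2 * Real.pi ^ 2 * ((k : ℝ) + 3) ^ 2) +
          Real.exp (-2 * Real.pi ^ 2 * (((k : ℝ) + 3) - 1 / 2) ^ 2)))
      ≤ 2 * Real.exp (-2 * Real.pi ^ 2 * (2 : ℝ) ^ 2) := by
  subst hh
  have hhm : 1 / 2 ^ l * (m : ℝ) ≤ 1 / 2 := one_div_two_pow_mul_le_half (by omega) hm
  exact ⟨remainder_le_of_nonneg_of_le_half (by positivity) hhm, psiHat_two_add_tsum_tail_le⟩

/-- Bound on the Wiener norm of the level-one remainder `g₁`: with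
`ψ̂(t) = exp(−2π²t²)`, `h = 1/2^ℓ` (`ℓ ≥ 2`) and `0 < m < 2^{ℓ−1}` an integer,
`‖g₁‖ = ψ̂(hm+2) + Σ_{k≥3}(ψ̂(hm+k) + |ψ̂(hm−k)|) ≤ ψ̂(2) + Σ_{k≥3}(ψ̂(k)+ψ̂(k−1/2))
 ≤ 2ψ̂(2)`. -/
theorem remainder_level_one_bound (l : ℕ) (hl : 2 ≤ l) (m : ℕ) (hm0 : 0 < m)
    (hm : m < 2 ^ (l - 1)) (h : ℝ) (hh : h = 1 / 2 ^ l) :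
    Real.exp (-2 * Real.pi ^ 2 * (h * m + 2) ^ 2) +
        (∑' k : ℕ, (Real.exp (-2 * Real.pi ^ 2 * (h * m + ((k : ℝ) + 3)) ^ 2) +
          |Real.exp (-2 * Real.pi ^ 2 * (h * m - ((k : ℝ) + 3)) ^ 2)|))
      ≤ Real.exp (-2 * Real.pi ^ 2 * (2 : ℝ) ^ 2) +
        (∑' k : ℕ, (Real.exp (-2 * Real.pi ^ 2 * ((k : ℝ) + 3) ^ 2) +
          Real.exp (-2 * Real.pi ^ 2 * (((k : ℝ) + 3) - 1 / 2) ^ 2))) ∧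
    Real.exp (-2 * Real.pi ^ 2 * (2 : ℝ) ^ 2) +
        (∑' k : ℕ, (Real.exp (-2 * Real.pi ^ 2 * ((k : ℝ) + 3) ^ 2) +
          Real.exp (-2 * Real.pi ^ 2 * (((k : ℝ) + 3) - 1 / 2) ^ 2)))
      ≤ 2 * Real.exp (-2 * Real.pi ^ 2 * (2 : ℝ) ^ 2) :=
  remainder_level_one_bound_general l hl m hm h hh
end
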